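/- Let f : ℝⁿ → ℝ be smooth and positive, let l ∈ ℕ, and r_i, a_i ∈ ℝ for i = 1,…,l with ζ = ∑ᵢ rᵢaᵢ ≠ 0 and η = ∑ᵢ rᵢaᵢ² ≠ 0. Set α = ζ/η and β = ζ²/η. Then ∑ᵢ rᵢ * Δ(f^{aᵢ})/f^{aᵢ} = β * Δ(f^{1/α})/f^{1/α}, where Δ is the Euclidean Laplacian. -/

import Mathlib

/-- Partial derivative in the `i`-th coordinate direction on `ℝⁿ`. -/
noncomputable def pd {n : ℕ} (i : Fin n) (g : (Fin n → ℝ) → ℝ) (x : Fin n → ℝ) : ℝ :=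
  fderiv ℝ g x (Pi.single i 1)

section
variable {n : ℕ} (f : (Fin n → ℝ) → ℝ)

lemma pd_smooth (hf : ContDiff ℝ (⊤ : ℕ∞) f) (j : Fin n) : ContDiff ℝ (⊤ : ℕ∞) (pd j f) := by
  exact (ContinuousLinearMap.apply ℝ ℝ (Pi.single j 1)).contDiff.comp
    (hf.fderiv_right (m := (⊤ : ℕ∞)) (by exact_mod_cast le_top))

lemma pd_rpow (hf : ContDiff ℝ (⊤ : ℕ∞) f) (hpos : ∀ x, 0 < f x) (c : ℝ) (j : Fin n) (x : Fin n → ℝ) :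
    pd j (fun y => f y ^ c) x = c * f x ^ (c - 1) * pd j f x := by
  have h := ((hf.differentiable (by simp)) x).hasFDerivAt
  have h2 := h.rpow_const (p := c) (Or.inl (hpos x).ne')
  simp only [pd, h2.fderiv]
  simp [mul_assoc]

lemma pd_pd_rpow (hf : ContDiff ℝ (⊤ : ℕ∞) f) (hpos : ∀ x, 0 < f x) (c : ℝ) (j : Fin n) (x : Fin n → ℝ) :
    pd j (pd j (fun y => f y ^ c)) x =
      c * ((c - 1) * f x ^ (c - 2) * (pd j f x) ^ 2 + f x ^ (c - 1) * pd j (pd j f) x) := by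
  have hfd := hf.differentiable (by simp)
  have hpdf := pd_smooth f hf j
  have heq : pd j (fun y => f y ^ c) = fun y => c * (f y ^ (c - 1) * pd j f y) := by
    funext y; rw [pd_rpow f hf hpos]; ring
  rw [heq]
  have h1 : HasFDerivAt (fun y => f y ^ (c - 1))
      (((c - 1) * f x ^ (c - 1 - 1)) • fderiv ℝ f x) x :=
    ((hfd x).hasFDerivAt).rpow_const (Or.inl (hpos x).ne')
  have h2 : HasFDerivAt (pd j f) (fderiv ℝ (pd j f) x) x :=
    ((hpdf.differentiable (by simp)) x).hasFDerivAt
  have h3 : HasFDerivAt (fun y => c * (f y ^ (c - 1) * pd j f y)) _ x := (h1.mul h2).const_mul c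
  rw [pd, h3.fderiv]
  simp only [ContinuousLinearMap.coe_smul', Pi.smul_apply, ContinuousLinearMap.add_apply,
    ContinuousLinearMap.coe_add', smul_eq_mul]
  show c * (f x ^ (c-1) * fderiv ℝ (pd j f) x _ + pd j f x * ((c-1) * f x ^ (c-1-1) * fderiv ℝ f x _)) = _
  rw [show pd j (pd j f) x = fderiv ℝ (pd j f) x (Pi.single j 1) from rfl,
      show pd j f x = fderiv ℝ f x (Pi.single j 1) from rfl]
  ring_nf

lemma key (hf : ContDiff ℝ (⊤ : ℕ∞) f) (hpos : ∀ x, 0 < f x) (c : ℝ) (x : Fin n → ℝ) :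
    (∑ j, pd j (pd j (fun y => f y ^ c)) x) / f x ^ c =
      c * (c - 1) * ((∑ j, (pd j f x) ^ 2) / f x ^ (2:ℝ)) +
        c * ((∑ j, pd j (pd j f) x) / f x) := by
  have hne : f x ≠ 0 := (hpos x).ne'
  have hc : f x ^ c ≠ 0 := (Real.rpow_pos_of_pos (hpos x) c).ne'
  have h2 : f x ^ (2:ℝ) ≠ 0 := (Real.rpow_pos_of_pos (hpos x) 2).ne'
  have e1 : f x ^ (c - 2) = f x ^ c / f x ^ (2:ℝ) := Real.rpow_sub (hpos x) c 2
  have e2 : f x ^ (c - 1) = f x ^ c / f x := by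
    rw [Real.rpow_sub (hpos x) c 1, Real.rpow_one]
  rw [Finset.sum_congr rfl fun j _ => pd_pd_rpow f hf hpos c j x]
  simp only [e1, e2]
  simp only [mul_add, Finset.sum_add_distrib, ← Finset.mul_sum]
  field_simp

end

theorem stmt3 {n : ℕ} (f : (Fin n → ℝ) → ℝ) (hf : ContDiff ℝ (⊤ : ℕ∞) f)
    (hpos : ∀ x, 0 < f x) (l : ℕ) (r a : Fin l → ℝ)
    (hζ : (∑ i, r i * a i) ≠ 0) (hη : (∑ i, r i * a i ^ 2) ≠ 0) :
    let ζ : ℝ := ∑ i, r i * a i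
    let η : ℝ := ∑ i, r i * a i ^ 2
    let α : ℝ := ζ / η
    let β : ℝ := ζ ^ 2 / η
    ∀ x, (∑ i, r i * ((∑ j, pd j (pd j (fun y => f y ^ a i)) x) / f x ^ a i)) =
      β * ((∑ j, pd j (pd j (fun y => f y ^ (1 / α))) x) / f x ^ (1 / α)) := by
  intro ζ η α β x
  have hζ' : ζ ≠ 0 := hζ
  have hη' : η ≠ 0 := hη
  set G : ℝ := (∑ j, (pd j f x) ^ 2) / f x ^ (2:ℝ) with hG
  set H : ℝ := (∑ j, pd j (pd j f) x) / f x with hH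
  have hL : ∀ i, r i * ((∑ j, pd j (pd j (fun y => f y ^ a i)) x) / f x ^ a i)
      = (r i * a i ^ 2 - r i * a i) * G + (r i * a i) * H := by
    intro i
    rw [key f hf hpos (a i) x]
    ring
  rw [Finset.sum_congr rfl fun i _ => hL i, Finset.sum_add_distrib,
    ← Finset.sum_mul, ← Finset.sum_mul, Finset.sum_sub_distrib,
    key f hf hpos (1 / α) x]
  show (η - ζ) * G + ζ * H = β * (1 / α * (1 / α - 1) * G + 1 / α * H)
  have hβ : β = ζ ^ 2 / η := rfl
  have hα : α = ζ / η := rfl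
  rw [hβ, hα]
  field_simp
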